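/- Let L/K be a (possibly infinite) Galois extension of fields, let K' be a field extension of K, and let L' be a field containing both L and K' with L' Galois over K'. Then the restriction homomorphism Gal(L'/K') → Gal(L/L ∩ K') is surjective. -/

import Mathlib

/-!
The restriction map `ρ : Gal(L'/K') → Gal(L/K)` is a continuous homomorphism out of a compact
group, so its image is a closed subgroup of `Gal(L/K)`. By infinite Galois theory a closed
subgroup is the fixing subgroup of its fixed field. An element of `L` fixed by the image of `ρ`
is fixed by all of `Gal(L'/K')`, hence lies in `K'`. So the fixed field lies in `L ∩ K'`, and
every `τ` fixing `L ∩ K'` is a restriction.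
-/

open IntermediateField

theorem AlgEquiv.continuous_restrictScalarsHom (K K' L : Type*) [Field K] [Field K'] [Field L]
    [Algebra K K'] [Algebra K' L] [Algebra K L] [IsScalarTower K K' L] :
    Continuous (AlgEquiv.restrictScalarsHom K : Gal(L/K') →* Gal(L/K)) := by
  refine continuous_of_continuousAt_one _ (continuousAt_def.mpr fun N hN => ?_)
  rw [map_one, krullTopology_mem_nhds_one_iff] at hN
  obtain ⟨E, hE, hEN⟩ := hN
  -- `E = K(S)` with `S` finite; then `K'(S)/K'` is finite and its fixing subgroup maps into `N`.
  obtain ⟨S, rfl⟩ := E.fg_of_fg_toSubalgebra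
    (Subalgebra.fg_of_fg_toSubmodule ((Submodule.fg_iff_finiteDimensional _).mpr hE))
  have : FiniteDimensional K' (adjoin K' (S : Set L)) :=
    finiteDimensional_adjoin fun x hx =>
      ((IntermediateField.isIntegral_iff.mp (IsIntegral.of_finite K
        (⟨x, subset_adjoin K _ hx⟩ : adjoin K (S : Set L)))).tower_top)
  refine Filter.mem_of_superset ((adjoin K' (S : Set L)).fixingSubgroup_isOpen.mem_nhds
    (one_mem _)) fun σ hσ => hEN ?_
  have hσ : ∀ x ∈ adjoin K' (S : Set L), σ • x = x := fun x hx => hσ ⟨x, hx⟩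
  rw [forall_mem_adjoin_smul_eq_self_iff] at hσ
  exact fun x => (forall_mem_adjoin_smul_eq_self_iff K (σ.restrictScalars K)).mpr hσ x x.2

theorem fixingSubgroup_fixedField_range_of_continuous {K L G : Type*} [Field K] [Field L]
    [Algebra K L] [IsGalois K L] [Group G] [TopologicalSpace G] [CompactSpace G]
    (ρ : G →* Gal(L/K)) (hρ : Continuous ρ) :
    (fixedField ρ.range).fixingSubgroup = ρ.range := by
  have : T2Space Gal(L/K) := krullTopology_t2
  exact InfiniteGalois.fixingSubgroup_fixedField
    ⟨ρ.range, (isCompact_range hρ).isClosed⟩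

section Restriction

variable {K K' L' : Type*} [Field K] [Field K'] [Field L'] [Algebra K K'] [Algebra K' L']
  [Algebra K L'] [IsScalarTower K K' L'] (L : IntermediateField K L') [Normal K L]

noncomputable def galRestrictNormal : Gal(L'/K') →* Gal(L/K) :=
  (AlgEquiv.restrictNormalHom (K₁ := L') L).comp (AlgEquiv.restrictScalarsHom K)

theorem galRestrictNormal_apply (σ : Gal(L'/K')) (x : L) :
    (galRestrictNormal L σ x : L') = σ x :=
  AlgEquiv.restrictNormalHom_apply L _ x

theorem continuous_galRestrictNormal : Continuous (galRestrictNormal (K' := K') L) :=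
  (InfiniteGalois.restrictNormalHom_continuous L).comp
    (AlgEquiv.continuous_restrictScalarsHom K K' L')

theorem mem_range_algebraMap_of_mem_fixedField_range_galRestrictNormal [IsGalois K' L'] {x : L}
    (hx : x ∈ fixedField (galRestrictNormal (K' := K') L).range) :
    (x : L') ∈ Set.range (algebraMap K' L') :=
  (InfiniteGalois.mem_range_algebraMap_iff_fixed _).mpr fun σ =>
    (galRestrictNormal_apply L σ x).symm.trans (congrArg Subtype.val (hx ⟨_, σ, rfl⟩))

end Restriction

/-- Let `L/K` be a (possibly infinite) Galois extension, `K'` a field extension of `K`,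
and `L'` a field containing both `L` and `K'` with `L'` Galois over `K'` (everything
inside the common field `L'`).  Then the restriction homomorphism
`Gal(L'/K') → Gal(L/L ∩ K')` is surjective: every automorphism of `L` fixing
`L ∩ K'` pointwise lifts to an automorphism of `L'` over `K'`. -/
theorem galois_restriction_surjective
    (K L' : Type*) [Field K] [Field L'] [Algebra K L']
    (L K' : IntermediateField K L')
    (hL : IsGalois K L)
    (hL' : IsGalois (↥K') L')
    (τ : ↥L ≃ₐ[K] ↥L)
    (hτ : ∀ x : L', (hx : x ∈ L ⊓ K') →
      τ ⟨x, (inf_le_left : L ⊓ K' ≤ L) hx⟩ = ⟨x, (inf_le_left : L ⊓ K' ≤ L) hx⟩) :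
    ∃ σ : L' ≃ₐ[↥K'] L', ∀ x : L', (hx : x ∈ L) → σ x = ↑(τ ⟨x, hx⟩) := by
  have hτρ : τ ∈ (fixedField (galRestrictNormal (K' := K') L).range).fixingSubgroup :=
    fun ⟨x, hx⟩ => by
      obtain ⟨y, hy⟩ := mem_range_algebraMap_of_mem_fixedField_range_galRestrictNormal L hx
      exact hτ x ⟨x.2, hy ▸ y.2⟩
  rw [fixingSubgroup_fixedField_range_of_continuous _ (continuous_galRestrictNormal L)] at hτρ
  obtain ⟨σ, rfl⟩ := hτρ
  exact ⟨σ, fun x hx => (galRestrictNormal_apply L σ ⟨x, hx⟩).symm⟩
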